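/- arXiv:1909.02612 — 2 statements merged into one kernel-verified Lean document; each statement's English description precedes it below -/
import Mathlib

section
/- There exists an infinite sequence over a 3-element alphabet that is nonrepetitive, i.e., contains no contiguous block of the form ww with w a nonempty word (Thue's theorem). -/
private def tm : ℕ → Bool
  | 0 => false
  | (n+1) =>
    if (n+1) % 2 = 0 then tm ((n+1)/2) else !tm ((n+1)/2)
decreasing_by all_goals exact Nat.div_lt_self (Nat.succ_pos n) one_lt_two

private lemma tmc {p q : ℕ} (h : p = q) : tm p = tm q := by rw [h]

private lemma tm_even (k : ℕ) : tm (2*k) = tm k := by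
  cases k with
  | zero => rfl
  | succ m =>
    rw [show 2*(m+1) = (2*m+1)+1 by ring, tm]
    have h1 : (2*m+1+1) % 2 = 0 := by omega
    have h2 : (2*m+1+1)/2 = m+1 := by omega
    simp [h1, h2]

private lemma tm_odd (k : ℕ) : tm (2*k+1) = !tm k := by
  rw [show 2*k+1 = (2*k)+1 by ring, tm]
  have h1 : ¬ ((2*k+1) % 2 = 0) := by omega
  have h2 : (2*k+1)/2 = k := by omega
  simp [h1, h2]

private lemma tm_ne (k : ℕ) : tm (2*k) ≠ tm (2*k+1) := by
  rw [tm_even, tm_odd]; cases tm k <;> simp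

private lemma no_triple (m : ℕ) : ¬ (tm m = tm (m+1) ∧ tm (m+1) = tm (m+2)) := by
  rintro ⟨h1, h2⟩
  rcases Nat.even_or_odd m with ⟨k, hk⟩ | ⟨k, hk⟩
  · exact tm_ne k (by rw [tmc (show 2*k = m by omega), tmc (show 2*k+1 = m+1 by omega)]; exact h1)
  · exact tm_ne (k+1) (by
      rw [tmc (show 2*(k+1) = m+1 by omega), tmc (show 2*(k+1)+1 = m+2 by omega)]; exact h2)

private lemma bool_ne_not {a b : Bool} (h : ¬ ((!a) = b)) : a = b := by
  cases a <;> cases b <;> simp_all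

private lemma alt5 (n : ℕ) (h0 : tm n ≠ tm (n+1)) (h1 : tm (n+1) ≠ tm (n+2))
    (h2 : tm (n+2) ≠ tm (n+3)) (h3 : tm (n+3) ≠ tm (n+4)) : False := by
  rcases Nat.even_or_odd n with ⟨k, hk⟩ | ⟨k, hk⟩
  · have w1 : tm (2*k+1) ≠ tm (2*(k+1)) := by
      rw [tmc (show 2*k+1 = n+1 by omega), tmc (show 2*(k+1) = n+2 by omega)]; exact h1
    have w2 : tm (2*(k+1)+1) ≠ tm (2*(k+2)) := by
      rw [tmc (show 2*(k+1)+1 = n+3 by omega), tmc (show 2*(k+2) = n+4 by omega)]; exact h3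
    rw [tm_odd, tm_even] at w1 w2
    exact no_triple k ⟨bool_ne_not w1, bool_ne_not w2⟩
  · have w1 : tm (2*k+1) ≠ tm (2*(k+1)) := by
      rw [tmc (show 2*k+1 = n by omega), tmc (show 2*(k+1) = n+1 by omega)]; exact h0
    have w2 : tm (2*(k+1)+1) ≠ tm (2*(k+2)) := by
      rw [tmc (show 2*(k+1)+1 = n+2 by omega), tmc (show 2*(k+2) = n+3 by omega)]; exact h2
    rw [tm_odd, tm_even] at w1 w2
    exact no_triple k ⟨bool_ne_not w1, bool_ne_not w2⟩

private def Ov (l : ℕ) : Prop := ∃ i, ∀ j ≤ l, tm (i+j) = tm (i+l+j)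

private lemma tm_odd' (k : ℕ) : tm k = !tm (2*k+1) := by rw [tm_odd]; simp

private lemma no_ov : ∀ l, 1 ≤ l → ¬ Ov l := by
  intro l
  induction l using Nat.strong_induction_on with
  | _ l ih =>
    rintro hl ⟨i, h⟩
    rcases Nat.even_or_odd l with ⟨m, hm⟩ | ⟨m, hm⟩
    · -- l even, l = 2m, reduce to period m
      have hm1 : 1 ≤ m := by omega
      apply ih m (by omega) hm1
      rcases Nat.even_or_odd i with ⟨a, ha⟩ | ⟨a, ha⟩
      · refine ⟨a, fun j hj => ?_⟩
        calc tm (a+j) = tm (2*(a+j)) := (tm_even _).symm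
          _ = tm (i + 2*j) := tmc (by omega)
          _ = tm (i + l + 2*j) := h (2*j) (by omega)
          _ = tm (2*(a+m+j)) := tmc (by omega)
          _ = tm (a+m+j) := tm_even _
      · refine ⟨a, fun j hj => ?_⟩
        calc tm (a+j) = !tm (2*(a+j)+1) := tm_odd' _
          _ = !tm (i + 2*j) := by rw [tmc (show 2*(a+j)+1 = i + 2*j by omega)]
          _ = !tm (i + l + 2*j) := by rw [h (2*j) (by omega)]
          _ = !tm (2*(a+m+j)+1) := by rw [tmc (show i + l + 2*j = 2*(a+m+j)+1 by omega)]
          _ = tm (a+m+j) := (tm_odd' _).symm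
    · -- l odd
      rcases Nat.lt_or_ge l 3 with h3 | h3
      · -- l = 1
        have hl1 : l = 1 := by omega
        subst hl1
        refine no_triple i ⟨?_, ?_⟩
        · have := h 0 (by omega); simpa using this
        · have := h 1 (by omega); simpa using this
      · -- l odd ≥ 3 : tm alternates on [i, i+2l], contradiction with alt5
        have key : ∀ n, i ≤ n → n < i + 2*l → tm n ≠ tm (n+1) := by
          intro n hn1 hn2
          obtain ⟨j, rfl⟩ : ∃ j, n = i + j := ⟨n - i, by omega⟩
          rcases Nat.even_or_odd (i+j) with ⟨b, hb⟩ | ⟨b, hb⟩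
          · rw [tmc (show i+j = 2*b by omega), tmc (show i+j+1 = 2*b+1 by omega)]
            exact tm_ne b
          · -- i+j odd
            rcases Nat.lt_or_ge j l with hjl | hjl
            · -- use s(n) = s(n+l), n+l even
              obtain ⟨b, hb2⟩ : ∃ b, i + j + l = 2*b := by
                rcases Nat.even_or_odd (i+j+l) with ⟨b, hb2⟩ | ⟨b, hb2⟩
                · exact ⟨b, by omega⟩
                · exfalso; omega
              have e1 : tm (i+j) = tm (i+l+j) := h j (by omega)
              have e2 : tm (i+j+1) = tm (i+l+j+1) := by
                have := h (j+1) (by omega)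
                rw [tmc (show i+(j+1) = i+j+1 by omega), tmc (show i+l+(j+1) = i+l+j+1 by omega)]
                  at this
                exact this
              rw [e1, e2]
              rw [tmc (show i+l+j = 2*b by omega), tmc (show i+l+j+1 = 2*b+1 by omega)]
              exact tm_ne b
            · -- n ≥ i + l : use s(n) = s(n-l), n-l even
              obtain ⟨j', rfl⟩ : ∃ j', j = l + j' := ⟨j - l, by omega⟩
              obtain ⟨b, hb2⟩ : ∃ b, i + j' = 2*b := by
                rcases Nat.even_or_odd (i+j') with ⟨b, hb2⟩ | ⟨b, hb2⟩
                · exact ⟨b, by omega⟩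
                · exfalso; omega
              have e1 : tm (i+j') = tm (i+(l+j')) := by
                have := h j' (by omega)
                rw [tmc (show i+l+j' = i+(l+j') by omega)] at this
                exact this
              have e2 : tm (i+j'+1) = tm (i+(l+j')+1) := by
                have := h (j'+1) (by omega)
                rw [tmc (show i+(j'+1) = i+j'+1 by omega),
                  tmc (show i+l+(j'+1) = i+(l+j')+1 by omega)] at this
                exact this
              rw [← e1, ← e2]
              rw [tmc (show i+j' = 2*b by omega), tmc (show i+j'+1 = 2*b+1 by omega)]
              exact tm_ne b
        exact alt5 i (key i (le_refl i) (by omega))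
          (by have := key (i+1) (by omega) (by omega)
              rw [tmc (show i+1+1 = i+2 by omega)] at this; exact this)
          (by have := key (i+2) (by omega) (by omega)
              rw [tmc (show i+2+1 = i+3 by omega)] at this; exact this)
          (by have := key (i+3) (by omega) (by omega)
              rw [tmc (show i+3+1 = i+4 by omega)] at this; exact this)

private def xx (n : ℕ) : Fin 3 :=
  if tm n = tm (n+1) then 0 else if tm n then 2 else 1

/-- Thue's theorem: there exists an infinite sequence over a
3-element alphabet containing no contiguous block of the form `ww` with `w`
a nonempty word. -/
theorem thue_infinite_nonrepetitive_ternary_sequence :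
    ∃ x : ℕ → Fin 3, ¬ ∃ i l : ℕ, 1 ≤ l ∧ ∀ j < l, x (i + j) = x (i + l + j) := by
  refine ⟨xx, ?_⟩
  rintro ⟨i, l, hl, hsq⟩
  set c : Bool := xor (tm i) (tm (i+l)) with hc
  have H : ∀ j ≤ l, xor (tm (i+j)) (tm (i+l+j)) = c := by
    intro j hj
    induction j with
    | zero => simp [hc]
    | succ j ihj =>
      have IH := ihj (by omega)
      have hxx := hsq j (by omega)
      have e1 : i + (j+1) = i + j + 1 := by omega
      have e2 : i + l + (j+1) = i + l + j + 1 := by omega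
      rw [tmc e1, tmc e2]
      unfold xx at hxx
      rcases ha : tm (i+j) <;> rcases hb : tm (i+j+1) <;>
        rcases ha' : tm (i+l+j) <;> rcases hb' : tm (i+l+j+1) <;>
        simp_all
  rcases hcv : c with _ | _
  · -- c = false : genuine overlap in tm
    refine no_ov l hl ⟨i, fun j hj => ?_⟩
    have := H j hj
    rw [hcv] at this
    simpa using this
  · -- c = true : tm constant on [i, i+l], contradiction
    have hconst : ∀ j < l, tm (i+j) = tm (i+j+1) := by
      intro j hj
      have h1 := H j (by omega)
      have h2 := H (j+1) (by omega)
      rw [tmc (show i+(j+1) = i+j+1 by omega), tmc (show i+l+(j+1) = i+l+j+1 by omega)] at h2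
      have hxx := hsq j hj
      unfold xx at hxx
      rw [hcv] at h1 h2
      rcases ha : tm (i+j) <;> rcases hb : tm (i+j+1) <;>
        rcases ha' : tm (i+l+j) <;> rcases hb' : tm (i+l+j+1) <;>
        simp_all
    have hchain : ∀ j ≤ l, tm (i+j) = tm i := by
      intro j hj
      induction j with
      | zero => rfl
      | succ j ihj =>
        rw [tmc (show i+(j+1) = i+j+1 by omega), ← hconst j (by omega)]
        exact ihj (by omega)
    have h0 := H 0 (by omega)
    rw [hcv] at h0
    have hIL : tm (i+l) = tm i := hchain l (le_refl l)
    rw [tmc (show i+0 = i by omega), tmc (show i+l+0 = i+l by omega), hIL] at h0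
    simp at h0
end

section
/- Every k-tree on n ≥ k+1 vertices can be embedded as a subgraph (via an injective graph homomorphism) into the universal k-tree U defined as the union of the increasing sequence U_1 = K_{k+1}, U_{i+1} obtained from U_i by adding, for every k-clique of U_i, a new vertex adjacent to all vertices of that clique. -/
/-- A graph on `Fin n` is built as a `k`-tree (in the order `0, 1, …, n-1`):
the first `k+1` vertices form a complete graph, and every later vertex is
adjacent exactly to the vertices of a `k`-clique among the earlier vertices. -/
def BuiltAsKTree (k : ℕ) {n : ℕ} (G : SimpleGraph (Fin n)) : Prop :=
  k + 1 ≤ n ∧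
  (∀ i j : Fin n, (i : ℕ) < k + 1 → (j : ℕ) < k + 1 → i ≠ j → G.Adj i j) ∧
  ∀ j : Fin n, k + 1 ≤ (j : ℕ) →
    ∃ s : Finset (Fin n), s.card = k ∧ (∀ i ∈ s, (i : ℕ) < (j : ℕ)) ∧
      (∀ i : Fin n, (i : ℕ) < (j : ℕ) → (G.Adj i j ↔ i ∈ s)) ∧
      (∀ a ∈ s, ∀ b ∈ s, a ≠ b → G.Adj a b)

/-- A graph `H` is a `k`-tree if it is isomorphic to a graph on `Fin n`
built as a `k`-tree. -/
def IsKTree (k : ℕ) {W : Type*} (H : SimpleGraph W) : Prop :=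
  ∃ (n : ℕ) (H' : SimpleGraph (Fin n)), Nonempty (H ≃g H') ∧ BuiltAsKTree k H'

/-- `G` together with the increasing family of finite vertex sets `s 1 ⊆ s 2 ⊆ …`
is the universal chain `U₁ ⊆ U₂ ⊆ …` of `k`-trees: `s 1` induces a complete
graph `K_{k+1}`, and level `i+1` is obtained from level `i` by adding, for each
`k`-clique of level `i`, exactly one new vertex adjacent precisely to the
vertices of that clique.  Every vertex of `G` appears at some level and every
edge of `G` arises from this construction. -/
def IsUnivChain (k : ℕ) {V : Type*} (G : SimpleGraph V) (s : ℕ → Finset V) : Prop :=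
  s 0 = ∅ ∧
  (∀ i, s i ⊆ s (i + 1)) ∧
  (∀ v : V, ∃ i, v ∈ s i) ∧
  (s 1).card = k + 1 ∧
  (∀ u ∈ s 1, ∀ v ∈ s 1, u ≠ v → G.Adj u v) ∧
  (∀ i, 1 ≤ i → ∀ v ∈ s (i + 1), v ∉ s i →
      ∃ t : Finset V, t ⊆ s i ∧ t.card = k ∧
        (∀ a ∈ t, ∀ b ∈ t, a ≠ b → G.Adj a b) ∧
        (∀ u ∈ s (i + 1), u ≠ v → (G.Adj v u ↔ u ∈ t))) ∧
  (∀ i, 1 ≤ i → ∀ t : Finset V, t ⊆ s i → t.card = k →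
      (∀ a ∈ t, ∀ b ∈ t, a ≠ b → G.Adj a b) →
      ∃ v ∈ s (i + 1), v ∉ s i ∧ ∀ u ∈ s (i + 1), u ≠ v → (G.Adj v u ↔ u ∈ t)) ∧
  (∀ i, 1 ≤ i → ∀ v ∈ s (i + 1), ∀ w ∈ s (i + 1), v ∉ s i → w ∉ s i →
      (∀ u ∈ s i, (G.Adj v u ↔ G.Adj w u)) → v = w)

/-- every `k`-tree on `n ≥ k+1` vertices embeds as a subgraph
(via an injective graph homomorphism) into the universal `k`-tree `U`, the
union of the chain `U₁ = K_{k+1} ⊆ U₂ ⊆ …` where `U_{i+1}` adds, for every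
`k`-clique of `Uᵢ`, a new vertex joined to that clique.  (The condition
`n ≥ k+1` is part of `BuiltAsKTree`.) -/
theorem kTree_embeds_into_universal (k n : ℕ) (H : SimpleGraph (Fin n))
    (hH : BuiltAsKTree k H) {V : Type*} (G : SimpleGraph V)
    (s : ℕ → Finset V) (hU : IsUnivChain k G s) :
    ∃ f : H →g G, Function.Injective ⇑f := by
  haveI : DecidableEq V := Classical.decEq V
  obtain ⟨hkn, hbase, hstep⟩ := hH
  obtain ⟨hs0, hmono, hcov, hcard, hclique1, hnew, hexist, huniq⟩ := hU
  -- an element of s 1 for default values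
  have hs1ne : (s 1).Nonempty := Finset.card_pos.mp (by omega)
  obtain ⟨v0, hv0⟩ := hs1ne
  -- the key invariant
  have key : ∀ m : ℕ, k + 1 ≤ m → m ≤ n →
      ∃ (f : Fin n → V) (L : ℕ), 1 ≤ L ∧
        (∀ i : Fin n, (i : ℕ) < m → f i ∈ s L) ∧
        (∀ i j : Fin n, (i : ℕ) < m → (j : ℕ) < m → i ≠ j → f i ≠ f j) ∧
        (∀ i j : Fin n, (i : ℕ) < m → (j : ℕ) < m → H.Adj i j → G.Adj (f i) (f j)) := by
    intro m hm
    induction m, hm using Nat.le_induction with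
    | base =>
      intro _
      -- bijection from Fin (k+1) onto s 1
      have e : Fin (k + 1) ≃ {x // x ∈ s 1} := (finCongr hcard.symm).trans (s 1).equivFin.symm
      refine ⟨fun i => if h : (i : ℕ) < k + 1 then (e ⟨i, h⟩ : V) else v0, 1, le_refl 1,
        ?_, ?_, ?_⟩
      · intro i hi
        simp only [hi, dif_pos]
        exact (e ⟨(i : ℕ), hi⟩).2
      · intro i j hi hj hij
        simp only [hi, hj, dif_pos]
        intro hc
        apply hij
        have h2 : (i : ℕ) = (j : ℕ) := by simpa using e.injective (Subtype.ext hc)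
        exact Fin.ext h2
      · intro i j hi hj hadj
        have hij : i ≠ j := hadj.ne
        simp only [hi, hj, dif_pos]
        refine hclique1 _ (e ⟨(i:ℕ), hi⟩).2 _ (e ⟨(j:ℕ), hj⟩).2 ?_
        intro hc
        apply hij
        have h2 : (i : ℕ) = (j : ℕ) := by simpa using e.injective (Subtype.ext hc)
        exact Fin.ext h2
    | succ m hm ih =>
      intro hmn
      obtain ⟨f, L, hL, hmem, hinj, hadj⟩ := ih (by omega)
      set j : Fin n := ⟨m, by omega⟩ with hj
      obtain ⟨t, htcard, htlt, htadj, htcl⟩ := hstep j hm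
      set t' : Finset V := t.image f with ht'
      have ht'sub : t' ⊆ s L := by
        intro x hx
        obtain ⟨a, ha, rfl⟩ := Finset.mem_image.mp hx
        exact hmem a (htlt a ha)
      have ht'card : t'.card = k := by
        rw [ht', Finset.card_image_of_injOn, htcard]
        intro a ha b hb hab
        by_contra hne
        exact hinj a b (htlt a ha) (htlt b hb) hne hab
      have ht'cl : ∀ x ∈ t', ∀ y ∈ t', x ≠ y → G.Adj x y := by
        intro x hx y hy hxy
        obtain ⟨a, ha, rfl⟩ := Finset.mem_image.mp hx
        obtain ⟨b, hb, rfl⟩ := Finset.mem_image.mp hy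
        have hab : a ≠ b := fun h => hxy (by rw [h])
        exact hadj a b (htlt a ha) (htlt b hb) (htcl a ha b hb hab)
      obtain ⟨v, hv1, hv2, hv3⟩ := hexist L hL t' ht'sub ht'card ht'cl
      refine ⟨Function.update f j v, L + 1, by omega, ?_, ?_, ?_⟩
      · intro i hi
        rcases eq_or_ne i j with rfl | hne
        · rw [Function.update_self]; exact hv1
        · rw [Function.update_of_ne hne]
          have : (i : ℕ) < m := by
            rcases Nat.lt_succ_iff_lt_or_eq.mp hi with h | h
            · exact h
            · exact absurd (Fin.ext h : i = j) hne
          exact hmono L (hmem i this)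
      · have newne : ∀ i : Fin n, (i : ℕ) < m → f i ≠ v := by
          intro i hi hc
          exact hv2 (hc ▸ hmem i hi)
        intro a b ha hb hab
        rcases eq_or_ne a j with rfl | hna
        · have hbm : (b : ℕ) < m := by
            rcases Nat.lt_succ_iff_lt_or_eq.mp hb with h | h
            · exact h
            · exact absurd (Fin.ext h : b = j) (Ne.symm hab)
          rw [Function.update_self, Function.update_of_ne (by exact fun h => hab h.symm)]
          exact fun h => newne b hbm h.symm
        · have ham : (a : ℕ) < m := by
            rcases Nat.lt_succ_iff_lt_or_eq.mp ha with h | h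
            · exact h
            · exact absurd (Fin.ext h : a = j) hna
          rw [Function.update_of_ne hna]
          rcases eq_or_ne b j with rfl | hnb
          · rw [Function.update_self]
            exact newne a ham
          · have hbm : (b : ℕ) < m := by
              rcases Nat.lt_succ_iff_lt_or_eq.mp hb with h | h
              · exact h
              · exact absurd (Fin.ext h : b = j) hnb
            rw [Function.update_of_ne hnb]
            exact hinj a b ham hbm hab
      · -- adjacency with the new vertex
        have adjnew : ∀ i : Fin n, (i : ℕ) < m → H.Adj i j → G.Adj v (f i) := by
          intro i him hadjij
          have hit : i ∈ t := (htadj i him).mp hadjij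
          have hfi : f i ∈ t' := Finset.mem_image_of_mem f hit
          have hfis : f i ∈ s (L + 1) := hmono L (ht'sub hfi)
          have hfine : f i ≠ v := fun h => hv2 (h ▸ ht'sub hfi)
          exact (hv3 (f i) hfis hfine).mpr hfi
        intro a b ha hb hab
        rcases eq_or_ne a j with rfl | hna
        · have hbm : (b : ℕ) < m := by
            rcases Nat.lt_succ_iff_lt_or_eq.mp hb with h | h
            · exact h
            · exact absurd (Fin.ext h : b = j) hab.ne'
          rw [Function.update_self, Function.update_of_ne hab.ne']
          exact adjnew b hbm hab.symm
        · have ham : (a : ℕ) < m := by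
            rcases Nat.lt_succ_iff_lt_or_eq.mp ha with h | h
            · exact h
            · exact absurd (Fin.ext h : a = j) hna
          rw [Function.update_of_ne hna]
          rcases eq_or_ne b j with rfl | hnb
          · rw [Function.update_self]
            exact (adjnew a ham hab).symm
          · have hbm : (b : ℕ) < m := by
              rcases Nat.lt_succ_iff_lt_or_eq.mp hb with h | h
              · exact h
              · exact absurd (Fin.ext h : b = j) hnb
            rw [Function.update_of_ne hnb]
            exact hadj a b ham hbm hab
  obtain ⟨f, L, _, _, hinj, hadj⟩ := key n hkn (le_refl n)
  refine ⟨⟨f, fun {a b} h => hadj a b a.isLt b.isLt h⟩, ?_⟩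
  intro a b h
  by_contra hne
  exact hinj a b a.isLt b.isLt hne h
end
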